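/- Let X ∈ L_n. Then X is a fixed point of T (i.e., X maximizes Y ↦ X·Y over L_n) if and only if X² = DX for some diagonal matrix D. -/

import Mathlib

def elliptope (n : ℕ) : Set (Matrix (Fin n) (Fin n) ℝ) :=
  {X | X.PosSemidef ∧ ∀ i, X i i = 1}

def frob {n : ℕ} (A B : Matrix (Fin n) (Fin n) ℝ) : ℝ :=
  ∑ i, ∑ j, A i j * B i j

/-!
Write `X` as the Gram matrix of unit vectors `v i`. Replacing `v k` by an arbitrary unit vector `w`
stays in the elliptope and changes `X · Y` by `2 ⟪g, w⟫` plus a constant, where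
`g = ∑_{j ≠ k} X k j • v j`; if `X` is a maximiser then `w = v k` maximises `⟪g, w⟫`, so `g` is a
multiple of `v k`, i.e. `∑ j, X k j • v j = d k • v k`, which is row `k` of `X² = D X`.

Conversely, if `X² = D X` then `D ≥ 1` and `A = D - X` satisfies `A X = 0` and `A D = D A`, whence
`A = Aᴴ D⁻¹ A` is positive semidefinite. Thus `X · Y ≤ D · Y = tr D = tr (X²) = X · X`.
-/

open Matrix Finset
open scoped RealInnerProductSpace MatrixOrder ComplexOrder

section Frobenius

variable {n : ℕ}

lemma frob_eq_trace_mul_transpose (A B : Matrix (Fin n) (Fin n) ℝ) :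
    frob A B = trace (A * Bᵀ) := by
  simp [frob, trace, mul_apply]

lemma frob_sub_left (A B C : Matrix (Fin n) (Fin n) ℝ) :
    frob (A - B) C = frob A C - frob B C := by
  simp [frob, sub_mul, sum_sub_distrib]

lemma frob_nonneg {A B : Matrix (Fin n) (Fin n) ℝ} (hA : A.PosSemidef) (hB : B.PosSemidef) :
    0 ≤ frob A B := by
  have hS : (CFC.sqrt A)ᴴ = CFC.sqrt A := (CFC.sqrt_nonneg A).posSemidef.1
  have hSS : (CFC.sqrt A)ᴴ * CFC.sqrt A = A := by
    rw [hS]; exact CFC.sqrt_mul_sqrt_self A hA.nonneg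
  rw [frob_eq_trace_mul_transpose, ← conjTranspose_eq_transpose_of_trivial, hB.1.eq, ← hSS,
    Matrix.mul_assoc, trace_mul_comm (CFC.sqrt A)ᴴ]
  exact (hB.mul_mul_conjTranspose_same _).trace_nonneg

end Frobenius

lemma exists_gram_eq_of_posSemidef {ι 𝕜 : Type*} [Fintype ι] [DecidableEq ι] [RCLike 𝕜]
    {A : Matrix ι ι 𝕜} (hA : A.PosSemidef) : ∃ v : ι → EuclideanSpace 𝕜 ι, gram 𝕜 v = A := by
  refine ⟨fun j => WithLp.toLp 2 fun i => CFC.sqrt A i j, ?_⟩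
  rw [gram_eq_conjTranspose_mul (EuclideanSpace.basisFun ι 𝕜)]
  have hS : (CFC.sqrt A)ᴴ = CFC.sqrt A := (CFC.sqrt_nonneg A).posSemidef.1
  convert (congrArg (· * CFC.sqrt A) hS).trans (CFC.sqrt_mul_sqrt_self A hA.nonneg) using 3 <;>
  · ext; simp

section Gram

variable {n : ℕ} {E : Type*} [NormedAddCommGroup E] [InnerProductSpace ℝ E]

lemma gram_mem_elliptope_iff (v : Fin n → E) : gram ℝ v ∈ elliptope n ↔ ∀ i, ‖v i‖ = 1 := by
  simp only [elliptope, Set.mem_ofPred_eq, posSemidef_gram, true_and, gram_apply,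
    real_inner_self_eq_norm_sq, pow_eq_one_iff_of_nonneg (norm_nonneg _) two_ne_zero]

lemma isSymm_gram {ι : Type*} (v : ι → E) : (gram ℝ v).IsSymm :=
  Matrix.ext fun i j => real_inner_comm (v i) (v j)

lemma frob_gram_add_single (X : Matrix (Fin n) (Fin n) ℝ) (hX : X.IsSymm) (u : Fin n → E)
    (k : Fin n) (w : E) :
    frob X (gram ℝ (u + Pi.single k w)) =
      frob X (gram ℝ u) + 2 * ⟪∑ j, X k j • u j, w⟫ + X k k * ‖w‖ ^ 2 := by
  have hr : ∀ i (y : E), ⟪y, (Pi.single k w : Fin n → E) i⟫ = if i = k then ⟪y, w⟫ else 0 := by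
    intro i y; rcases eq_or_ne i k with rfl | hi <;> simp [*]
  have hl : ∀ i (y : E), ⟪(Pi.single k w : Fin n → E) i, y⟫ = if i = k then ⟪y, w⟫ else 0 := by
    intro i y; rw [real_inner_comm, hr]
  simp only [frob, gram_apply, Pi.add_apply, inner_add_left, inner_add_right, mul_add,
    sum_add_distrib, sum_inner, inner_smul_left]
  simp [hl, hr, ← hX.apply k]
  ring

lemma eq_norm_smul_of_forall_inner_le {g u : E} (hu : ‖u‖ = 1)
    (h : ∀ w : E, ‖w‖ = 1 → ⟪g, w⟫ ≤ ⟪g, u⟫) : g = ‖g‖ • u := by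
  rcases eq_or_ne g 0 with rfl | hg
  · simp
  have hle : ‖g‖ ≤ ⟪g, u⟫ := by
    simpa [inner_smul_right, real_inner_self_eq_norm_sq, norm_smul, hg, pow_two] using
      h (‖g‖⁻¹ • g) (by simp [norm_smul, hg])
  have heq : ⟪g, u⟫ = ‖g‖ * ‖u‖ := le_antisymm (real_inner_le_norm g u) (by rwa [hu, mul_one])
  simpa [hu] using inner_eq_norm_mul_iff_real.1 heq

lemma exists_sum_smul_eq_smul_of_forall_frob_le (v : Fin n → E) (hv : ∀ i, ‖v i‖ = 1)
    (hmax : ∀ Y ∈ elliptope n, frob (gram ℝ v) Y ≤ frob (gram ℝ v) (gram ℝ v)) (k : Fin n) :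
    ∃ c : ℝ, ∑ j, gram ℝ v k j • v j = c • v k := by
  set u := v - Pi.single k (v k)
  set g := ∑ j, gram ℝ v k j • u j
  have hXkk : gram ℝ v k k = 1 := ((gram_mem_elliptope_iff v).2 hv).2 k
  have hg : g = ‖g‖ • v k := by
    refine eq_norm_smul_of_forall_inner_le (hv k) fun w hw => ?_
    have hunit : ∀ i, ‖(u + (Pi.single k w : Fin n → E)) i‖ = 1 := by
      intro i; rcases eq_or_ne i k with rfl | hi <;> simp [u, *]
    have hle := hmax _ ((gram_mem_elliptope_iff _).2 hunit)
    nth_rw 3 [← sub_add_cancel v (Pi.single k (v k))] at hle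
    rw [frob_gram_add_single _ (isSymm_gram v), frob_gram_add_single _ (isSymm_gram v), hw,
      hv k] at hle
    linarith
  refine ⟨‖g‖ + 1, ?_⟩
  calc ∑ j, gram ℝ v k j • v j = g + gram ℝ v k k • v k := by
        simp [g, u, smul_sub, sum_sub_distrib, Pi.single_apply]
    _ = (‖g‖ + 1) • v k := by rw [hXkk, add_smul, one_smul, ← hg]

lemma gram_mul_self_eq_diagonal_mul {ι : Type*} [Fintype ι] [DecidableEq ι] (v : ι → E)
    (d : ι → ℝ) (hd : ∀ k, ∑ j, gram ℝ v k j • v j = d k • v k) :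
    gram ℝ v * gram ℝ v = diagonal d * gram ℝ v := by
  ext k i
  rw [diagonal_mul, gram_apply v k i, ← real_inner_smul_left, ← hd k, sum_inner]
  simp only [mul_apply, gram_apply, real_inner_smul_left]

end Gram

section MulSelfEqDiagonalMul

variable {ι : Type*} [Fintype ι] [DecidableEq ι] {X : Matrix ι ι ℝ} {d : ι → ℝ}

lemma one_le_of_mul_self_eq_diagonal_mul (hX : X.IsHermitian) (hdiag : ∀ i, X i i = 1)
    (hXd : X * X = diagonal d * X) (i : ι) : 1 ≤ d i := by
  have hdi : d i = ∑ j, X j i ^ 2 := by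
    have := congrFun (congrFun hXd i) i
    rw [diagonal_mul, hdiag, mul_one, mul_apply] at this
    rw [← this]
    exact sum_congr rfl fun j _ => by rw [sq, ← hX.apply j i, star_trivial]
  calc 1 = X i i ^ 2 := by rw [hdiag, one_pow]
    _ ≤ d i := hdi ▸ single_le_sum (fun j _ => sq_nonneg (X j i)) (mem_univ i)

lemma posSemidef_diagonal_sub_of_mul_self_eq (hX : X.IsHermitian) (hd : ∀ i, 0 < d i)
    (hXd : X * X = diagonal d * X) : (diagonal d - X).PosSemidef := by
  set D := diagonal d
  set E := diagonal fun i => (d i)⁻¹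
  have hDE : D * E = 1 := by
    rw [diagonal_mul_diagonal, ← diagonal_one]
    exact congrArg diagonal (funext fun i => mul_inv_cancel₀ (hd i).ne')
  have hED : E * D = 1 := by
    rw [diagonal_mul_diagonal, ← diagonal_one]
    exact congrArg diagonal (funext fun i => inv_mul_cancel₀ (hd i).ne')
  have hXD : X * D = D * X := by
    have := congrArg conjTranspose hXd
    rwa [conjTranspose_mul, conjTranspose_mul, hX.eq, diagonal_conjTranspose, star_trivial,
      hXd, eq_comm] at this
  set A := D - X
  have hAX : A * X = 0 := by rw [sub_mul, hXd, sub_self]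
  have hAD : A * D = D * A := by rw [sub_mul, mul_sub, hXD]
  have hEA : E * A = A * E := by
    calc E * A = E * (A * D) * E := by
          rw [Matrix.mul_assoc, Matrix.mul_assoc, hDE, Matrix.mul_one]
      _ = E * D * A * E := by rw [hAD, Matrix.mul_assoc E D]
      _ = A * E := by rw [hED, Matrix.one_mul]
  have hAh : Aᴴ = A := by rw [conjTranspose_sub, hX.eq, diagonal_conjTranspose, star_trivial]
  have hAEA : Aᴴ * E * A = A := by
    calc Aᴴ * E * A = A * E * D - E * (A * X) := by
          rw [hAh, mul_sub, ← Matrix.mul_assoc, hEA, Matrix.mul_assoc A E D]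
      _ = A := by rw [hAX, Matrix.mul_zero, sub_zero, Matrix.mul_assoc, hED, Matrix.mul_one]
  rw [← hAEA]
  exact (PosSemidef.diagonal fun i => (inv_pos.2 (hd i)).le).conjTranspose_mul_mul_same A

end MulSelfEqDiagonalMul

lemma frob_le_frob_self_of_mul_self_eq_diagonal_mul {n : ℕ} {X Y : Matrix (Fin n) (Fin n) ℝ}
    {d : Fin n → ℝ} (hX : X ∈ elliptope n) (hXd : X * X = diagonal d * X)
    (hY : Y ∈ elliptope n) : frob X Y ≤ frob X X := by
  have hd i : 0 < d i := one_pos.trans_le (one_le_of_mul_self_eq_diagonal_mul hX.1.1 hX.2 hXd i)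
  have hDX := frob_nonneg (posSemidef_diagonal_sub_of_mul_self_eq hX.1.1 hd hXd) hY.1
  have hDY : frob (diagonal d) Y = ∑ i, d i := by simp [frob, diagonal_apply, hY.2]
  have hXX : frob X X = ∑ i, d i := by
    rw [frob_eq_trace_mul_transpose, ← conjTranspose_eq_transpose_of_trivial, hX.1.1.eq, hXd]
    simp [trace, diagonal_mul, hX.2]
  rw [frob_sub_left] at hDX
  linarith

theorem stmt14 {n : ℕ} (X : Matrix (Fin n) (Fin n) ℝ) (hX : X ∈ elliptope n) :
    (∀ Y ∈ elliptope n, frob X Y ≤ frob X X) ↔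
      ∃ D : Matrix (Fin n) (Fin n) ℝ, D.IsDiag ∧ X * X = D * X := by
  constructor
  · intro hmax
    obtain ⟨v, rfl⟩ := exists_gram_eq_of_posSemidef hX.1
    choose d hd using
      exists_sum_smul_eq_smul_of_forall_frob_le v ((gram_mem_elliptope_iff v).1 hX) hmax
    exact ⟨diagonal d, isDiag_diagonal d, gram_mul_self_eq_diagonal_mul v d hd⟩
  · rintro ⟨D, hD, hXD⟩ Y hY
    rw [← hD.diagonal_diag] at hXD
    exact frob_le_frob_self_of_mul_self_eq_diagonal_mul hX hXD hY
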